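/- arXiv:1311.2335 — 3 statements merged into one kernel-verified Lean document; each statement's English description precedes it below -/
import Mathlib

section
/- For symmetric positive semidefinite $n \times n$ matrices $A$ and $B$ with $A$ positive definite, and conjugate exponents $p, q \in (-\infty, 1)$ with $pq = p + q$, one has $\phi_q(A) \cdot \phi_p(B) \leq \frac{1}{n} \operatorname{Trace}(AB)$, where $\phi_r(C) = (\frac{1}{n}\operatorname{Trace}(C^r))^{1/r}$ for $r \neq 0$ and $\phi_0(C) = (\det C)^{1/n}$. -/
open Matrix

/-- Real power of a symmetric matrix via the spectral theorem. -/
noncomputable def mpow {n : ℕ} (A : Matrix (Fin n) (Fin n) ℝ) (r : ℝ) :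
    Matrix (Fin n) (Fin n) ℝ :=
  if h : A.IsHermitian then
    (h.eigenvectorUnitary : Matrix (Fin n) (Fin n) ℝ) *
      Matrix.diagonal (fun i => h.eigenvalues i ^ r) *
      (star h.eigenvectorUnitary : Matrix (Fin n) (Fin n) ℝ)
  else A

open scoped Classical in
/-- The matrix mean `φ_r` of a positive semidefinite matrix: `(det C)^{1/n}` for `r = 0`,
`0` for `r < 0` and `C` singular, and `((1/n) Trace C^r)^{1/r}` otherwise. -/
noncomputable def phi {n : ℕ} (C : Matrix (Fin n) (Fin n) ℝ) (r : ℝ) : ℝ :=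
  if r = 0 then C.det ^ ((n : ℝ)⁻¹)
  else if r < 0 ∧ ¬ C.PosDef then 0
  else ((n : ℝ)⁻¹ * (mpow C r).trace) ^ r⁻¹

/-!
Diagonalize `A = U diag(a) U*` and let `d` be the diagonal of `U* B U`. Then
`Tr (A B) = ∑ aᵢ dᵢ`, and `d = M μ` for the eigenvalues `μ` of `B` and the doubly stochastic
matrix `Mᵢⱼ = (U* V)ᵢⱼ²`, `V` an orthogonal eigenbasis of `B`. By Jensen's inequality,
`∑ μⱼ ^ p ≤ ∑ dᵢ ^ p` for `0 < p < 1` and `∏ μⱼ ≤ ∏ dᵢ`. For `0 < p < 1` (so `q < 0`) the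
reverse Hölder inequality for `d` and `a` then gives `φ_q(A) φ_p(B) ≤ (1/n) ∑ aᵢ dᵢ`; the case
`p < 0` is the same with `A` and `B` exchanged, and `p = q = 0` is AM-GM for the products `aᵢ dᵢ`.
If the matrix carrying the negative exponent is singular, its `φ` is `0` and `Tr (A B) ≥ 0`.
-/

open Finset Real

section DoublyStochastic

variable {ι : Type*} [Fintype ι] [DecidableEq ι] {M : Matrix ι ι ℝ}

theorem ConcaveOn.sum_le_sum_mulVec_of_mem_doublyStochastic {s : Set ℝ} {f : ℝ → ℝ}
    (hf : ConcaveOn ℝ s f) (hM : M ∈ doublyStochastic ℝ ι) {x : ι → ℝ} (hx : ∀ i, x i ∈ s) :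
    ∑ i, f (x i) ≤ ∑ i, f ((M *ᵥ x) i) :=
  calc ∑ j, f (x j) = ∑ j, ∑ i, M i j * f (x j) := by
        simp only [← sum_mul, sum_col_of_mem_doublyStochastic hM, one_mul]
    _ = ∑ i, ∑ j, M i j * f (x j) := sum_comm
    _ ≤ ∑ i, f ((M *ᵥ x) i) := sum_le_sum fun i _ => by
        simpa [mulVec, dotProduct] using hf.le_map_sum (t := univ) (w := M i) (p := x)
          (fun j _ => nonneg_of_mem_doublyStochastic hM) (sum_row_of_mem_doublyStochastic hM i)
          (fun j _ => hx j)

theorem mulVec_nonneg_of_mem_doublyStochastic (hM : M ∈ doublyStochastic ℝ ι) {x : ι → ℝ}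
    (hx : 0 ≤ x) : 0 ≤ M *ᵥ x := fun _ =>
  sum_nonneg fun j _ => mul_nonneg (nonneg_of_mem_doublyStochastic hM) (hx j)

theorem mulVec_pos_of_mem_doublyStochastic (hM : M ∈ doublyStochastic ℝ ι) {x : ι → ℝ}
    (hx : ∀ i, 0 < x i) (i : ι) : 0 < (M *ᵥ x) i := by
  obtain ⟨j, -, hj⟩ := exists_ne_zero_of_sum_ne_zero
    ((sum_row_of_mem_doublyStochastic hM i).trans_ne one_ne_zero)
  exact sum_pos' (fun j _ => mul_nonneg (nonneg_of_mem_doublyStochastic hM) (hx j).le)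
    ⟨j, mem_univ j, mul_pos ((nonneg_of_mem_doublyStochastic hM).lt_of_ne' hj) (hx j)⟩

theorem prod_le_prod_mulVec_of_mem_doublyStochastic (hM : M ∈ doublyStochastic ℝ ι)
    {x : ι → ℝ} (hx : 0 ≤ x) : ∏ i, x i ≤ ∏ i, (M *ᵥ x) i := by
  by_cases hpos : ∀ i, 0 < x i
  · have hMx := mulVec_pos_of_mem_doublyStochastic hM hpos
    rw [← log_le_log_iff (prod_pos fun i _ => hpos i) (prod_pos fun i _ => hMx i),
      log_prod fun i _ => (hpos i).ne', log_prod fun i _ => (hMx i).ne']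
    exact strictConcaveOn_log_Ioi.concaveOn.sum_le_sum_mulVec_of_mem_doublyStochastic hM hpos
  · obtain ⟨j, hj⟩ := not_forall.mp hpos
    rw [prod_eq_zero (mem_univ j) (le_antisymm (not_lt.mp hj) (hx j))]
    exact prod_nonneg fun i _ => mulVec_nonneg_of_mem_doublyStochastic hM hx i

theorem map_sq_mem_doublyStochastic_of_mem_unitaryGroup {W : Matrix ι ι ℝ}
    (hW : W ∈ unitaryGroup ι ℝ) : W.map (· ^ 2) ∈ doublyStochastic ℝ ι := by
  have hrow i : (W * star W) i i = 1 := by rw [mem_unitaryGroup_iff.mp hW, one_apply_eq]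
  have hcol j : (star W * W) j j = 1 := by rw [mem_unitaryGroup_iff'.mp hW, one_apply_eq]
  refine mem_doublyStochastic_iff_sum.mpr ⟨fun i j => sq_nonneg _, fun i => ?_, fun j => ?_⟩
  · simpa [mul_apply, sq] using hrow i
  · simpa [mul_apply, sq] using hcol j

end DoublyStochastic

section PowerMean

variable {ι : Type*} [Fintype ι]

theorem inv_add_inv_eq_one_of_mul_eq_add {p q : ℝ} (hp : p ≠ 0) (hq : q ≠ 0)
    (hpq : p * q = p + q) : p⁻¹ + q⁻¹ = 1 := by
  field_simp
  linarith

/-- Reverse Hölder inequality, obtained from Hölder's inequality with exponents `1 / p` and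
`1 / (1 - p)` applied to `(x y) ^ p` and `y ^ (-p)`. -/
theorem Lp_mul_Lq_le_inner_of_lt_one [Nonempty ι] {x y : ι → ℝ} (hx : 0 ≤ x)
    (hy : ∀ i, 0 < y i) {p q : ℝ} (hp0 : 0 < p) (hp1 : p < 1) (hpq : p⁻¹ + q⁻¹ = 1) :
    (∑ i, x i ^ p) ^ p⁻¹ * (∑ i, y i ^ q) ^ q⁻¹ ≤ ∑ i, x i * y i := by
  have hq : q = (1 - p⁻¹)⁻¹ := by rw [← hpq, add_sub_cancel_left, inv_inv]
  subst hq
  have hconj : p⁻¹.HolderConjugate (1 - p)⁻¹ := by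
    rw [holderConjugate_iff, inv_inv, inv_inv, one_lt_inv₀ hp0]
    exact ⟨hp1, by ring⟩
  have hexp : -p * (1 - p)⁻¹ = (1 - p⁻¹)⁻¹ := by
    have h1 : 1 - p ≠ 0 := (sub_pos.mpr hp1).ne'
    have h2 : p - 1 ≠ 0 := (sub_neg.mpr hp1).ne
    field_simp
    ring
  set S := ∑ i, x i * y i
  set T := ∑ i, y i ^ (1 - p⁻¹)⁻¹
  have hS : 0 ≤ S := sum_nonneg fun i _ => mul_nonneg (hx i) (hy i).le
  have hT : 0 < T := sum_pos (fun i _ => rpow_pos_of_pos (hy i) _) univ_nonempty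
  have hholder : ∑ i, x i ^ p ≤ S ^ p * T ^ (1 - p) :=
    calc ∑ i, x i ^ p = ∑ i, (x i * y i) ^ p * y i ^ (-p) := sum_congr rfl fun i _ => by
          rw [mul_rpow (hx i) (hy i).le, mul_assoc, ← rpow_add (hy i), add_neg_cancel,
            rpow_zero, mul_one]
      _ ≤ (∑ i, ((x i * y i) ^ p) ^ p⁻¹) ^ (1 / p⁻¹) *
            (∑ i, (y i ^ (-p)) ^ (1 - p)⁻¹) ^ (1 / (1 - p)⁻¹) :=
          inner_le_Lp_mul_Lq_of_nonneg univ hconj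
            (fun i _ => rpow_nonneg (mul_nonneg (hx i) (hy i).le) p)
            (fun i _ => (rpow_pos_of_pos (hy i) _).le)
      _ = S ^ p * T ^ (1 - p) := by
          simp only [one_div, inv_inv, ← rpow_mul (hy _).le, hexp,
            rpow_rpow_inv (mul_nonneg (hx _) (hy _).le) hp0.ne', S, T]
  calc (∑ i, x i ^ p) ^ p⁻¹ * T ^ (1 - p⁻¹)⁻¹⁻¹
      ≤ (S ^ p * T ^ (1 - p)) ^ p⁻¹ * T ^ (1 - p⁻¹)⁻¹⁻¹ := by
        gcongr
        exact sum_nonneg fun i _ => rpow_nonneg (hx i) p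
    _ = S := by
        rw [mul_rpow (rpow_nonneg hS p) (rpow_nonneg hT.le _), rpow_rpow_inv hS hp0.ne',
          ← rpow_mul hT.le, mul_assoc, ← rpow_add hT, inv_inv,
          show (1 - p) * p⁻¹ + (1 - p⁻¹) = 0 by field_simp; ring, rpow_zero, mul_one]

noncomputable def powerMean (x : ι → ℝ) (r : ℝ) : ℝ :=
  ((Fintype.card ι : ℝ)⁻¹ * ∑ i, x i ^ r) ^ r⁻¹

theorem powerMean_nonneg {x : ι → ℝ} (hx : 0 ≤ x) (r : ℝ) : 0 ≤ powerMean x r :=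
  rpow_nonneg (mul_nonneg (by positivity) (sum_nonneg fun i _ => rpow_nonneg (hx i) r)) _

theorem powerMean_le_powerMean_of_sum_rpow_le {x y : ι → ℝ} (hx : 0 ≤ x) {r : ℝ} (hr : 0 < r)
    (h : ∑ i, x i ^ r ≤ ∑ i, y i ^ r) : powerMean x r ≤ powerMean y r := by
  unfold powerMean
  gcongr
  exact mul_nonneg (by positivity) (sum_nonneg fun i _ => rpow_nonneg (hx i) r)

theorem powerMean_mul_powerMean_le_of_lt_one [Nonempty ι] {x y : ι → ℝ} (hx : 0 ≤ x)
    (hy : ∀ i, 0 < y i) {p q : ℝ} (hp0 : 0 < p) (hp1 : p < 1) (hpq : p⁻¹ + q⁻¹ = 1) :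
    powerMean x p * powerMean y q ≤ (Fintype.card ι : ℝ)⁻¹ * ∑ i, x i * y i := by
  set c : ℝ := (Fintype.card ι : ℝ)⁻¹
  have hc : 0 < c := by positivity
  have hX : 0 ≤ ∑ i, x i ^ p := sum_nonneg fun i _ => rpow_nonneg (hx i) p
  have hY : 0 ≤ ∑ i, y i ^ q := sum_nonneg fun i _ => (rpow_pos_of_pos (hy i) q).le
  calc powerMean x p * powerMean y q
      = c ^ p⁻¹ * c ^ q⁻¹ * ((∑ i, x i ^ p) ^ p⁻¹ * (∑ i, y i ^ q) ^ q⁻¹) := by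
        rw [powerMean, powerMean, mul_rpow hc.le hX, mul_rpow hc.le hY]
        ring
    _ ≤ c * ∑ i, x i * y i := by
        rw [← rpow_add hc, hpq, rpow_one]
        gcongr
        exact Lp_mul_Lq_le_inner_of_lt_one hx hy hp0 hp1 hpq

end PowerMean

section Spectral

variable {ι : Type*} [Fintype ι] [DecidableEq ι]

theorem Matrix.IsHermitian.eq_eigenvectorUnitary_mul_diagonal_mul_star {A : Matrix ι ι ℝ}
    (hA : A.IsHermitian) :
    A = (hA.eigenvectorUnitary : Matrix ι ι ℝ) * diagonal hA.eigenvalues *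
      star (hA.eigenvectorUnitary : Matrix ι ι ℝ) := by
  simpa using hA.spectral_theorem

theorem Matrix.mul_diagonal_mul_star_apply_self (W : Matrix ι ι ℝ) (e : ι → ℝ) (i : ι) :
    (W * diagonal e * star W) i i = (W.map (· ^ 2) *ᵥ e) i := by
  rw [mul_apply]
  simp only [mul_diagonal, star_apply, star_trivial, mulVec, dotProduct, map_apply]
  exact sum_congr rfl fun j _ => by ring

/-- Schur: in the eigenbasis of `A`, the diagonal of `B` is a doubly stochastic
average of the eigenvalues of `B`. -/
theorem Matrix.IsHermitian.exists_mem_doublyStochastic_trace_mul_eq {A B : Matrix ι ι ℝ}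
    (hA : A.IsHermitian) (hB : B.IsHermitian) :
    ∃ M ∈ doublyStochastic ℝ ι,
      (A * B).trace = ∑ i, hA.eigenvalues i * (M *ᵥ hB.eigenvalues) i := by
  set U : Matrix ι ι ℝ := ↑hA.eigenvectorUnitary
  set W : Matrix ι ι ℝ := star U * (hB.eigenvectorUnitary : Matrix ι ι ℝ)
  have hW : W ∈ unitaryGroup ι ℝ := (star hA.eigenvectorUnitary * hB.eigenvectorUnitary).2
  refine ⟨W.map (· ^ 2), map_sq_mem_doublyStochastic_of_mem_unitaryGroup hW, ?_⟩
  have hconj : star U * B * U = W * diagonal hB.eigenvalues * star W := by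
    conv_lhs => rw [hB.eq_eigenvectorUnitary_mul_diagonal_mul_star]
    simp only [W, star_mul, star_star, Matrix.mul_assoc]
  calc (A * B).trace = (U * diagonal hA.eigenvalues * star U * B).trace := by
        conv_lhs => rw [hA.eq_eigenvectorUnitary_mul_diagonal_mul_star]
    _ = (diagonal hA.eigenvalues * (star U * B * U)).trace := by
        rw [Matrix.mul_assoc, Matrix.mul_assoc, trace_mul_comm, Matrix.mul_assoc,
          Matrix.mul_assoc]
    _ = ∑ i, hA.eigenvalues i * (W.map (· ^ 2) *ᵥ hB.eigenvalues) i := by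
        simp only [trace, diag_apply, diagonal_mul, hconj, mul_diagonal_mul_star_apply_self]

theorem det_rpow_mul_det_rpow_le_trace [Nonempty ι] {A B : Matrix ι ι ℝ} (hA : A.PosSemidef)
    (hB : B.PosSemidef) :
    A.det ^ (Fintype.card ι : ℝ)⁻¹ * B.det ^ (Fintype.card ι : ℝ)⁻¹ ≤
      (Fintype.card ι : ℝ)⁻¹ * (A * B).trace := by
  set c : ℝ := (Fintype.card ι : ℝ)⁻¹
  obtain ⟨M, hM, htr⟩ := hA.1.exists_mem_doublyStochastic_trace_mul_eq hB.1
  set a := hA.1.eigenvalues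
  set d := M *ᵥ hB.1.eigenvalues
  have ha : 0 ≤ a := hA.eigenvalues_nonneg
  have hd : 0 ≤ d := mulVec_nonneg_of_mem_doublyStochastic hM hB.eigenvalues_nonneg
  have hdetA : A.det = ∏ i, a i := by simpa using hA.1.det_eq_prod_eigenvalues
  have hdetB : B.det ≤ ∏ i, d i := by
    rw [show B.det = ∏ i, hB.1.eigenvalues i by simpa using hB.1.det_eq_prod_eigenvalues]
    exact prod_le_prod_mulVec_of_mem_doublyStochastic hM hB.eigenvalues_nonneg
  calc A.det ^ c * B.det ^ c ≤ (∏ i, a i) ^ c * (∏ i, d i) ^ c := by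
        rw [hdetA]
        exact mul_le_mul_of_nonneg_left (rpow_le_rpow hB.det_nonneg hdetB (by positivity))
          (rpow_nonneg (prod_nonneg fun i _ => ha i) _)
    _ = ∏ i, (a i * d i) ^ c := by
        rw [← mul_rpow (prod_nonneg fun i _ => ha i) (prod_nonneg fun i _ => hd i),
          ← prod_mul_distrib, finsetProd_rpow _ _ fun i _ => mul_nonneg (ha i) (hd i)]
    _ ≤ ∑ i, c * (a i * d i) :=
        geom_mean_le_arith_mean_weighted univ _ _ (fun i _ => by positivity)
          (by simp [c]) (fun i _ => mul_nonneg (ha i) (hd i))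
    _ = c * (A * B).trace := by rw [htr, mul_sum]

end Spectral

section MatrixMean

variable {n : ℕ}

theorem trace_mpow {C : Matrix (Fin n) (Fin n) ℝ} (hC : C.IsHermitian) (r : ℝ) :
    (mpow C r).trace = ∑ i, hC.eigenvalues i ^ r := by
  rw [mpow, dif_pos hC, trace_mul_cycle, Unitary.coe_star_mul_self, Matrix.one_mul,
    trace_diagonal]

theorem phi_zero (C : Matrix (Fin n) (Fin n) ℝ) : phi C 0 = C.det ^ (n : ℝ)⁻¹ := by
  simp [phi]

theorem phi_eq_powerMean {C : Matrix (Fin n) (Fin n) ℝ} (hC : C.IsHermitian) {r : ℝ}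
    (hr : r ≠ 0) (h : 0 < r ∨ C.PosDef) : phi C r = powerMean hC.eigenvalues r := by
  have : ¬(r < 0 ∧ ¬C.PosDef) := by
    rintro ⟨hr', hC'⟩
    exact h.elim (fun h => (h.trans hr').false) hC'
  rw [phi, if_neg hr, if_neg this, trace_mpow hC, powerMean, Fintype.card_fin]

theorem phi_of_neg_of_not_posDef {C : Matrix (Fin n) (Fin n) ℝ} {r : ℝ} (hr : r < 0)
    (hC : ¬C.PosDef) : phi C r = 0 := by
  rw [phi, if_neg hr.ne, if_pos ⟨hr, hC⟩]

theorem phi_mul_phi_le_trace_of_pos (hn : 0 < n) {A B : Matrix (Fin n) (Fin n) ℝ}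
    (hA : A.PosSemidef) (hB : B.PosSemidef) {p q : ℝ} (hp0 : 0 < p) (hp1 : p < 1)
    (hpq : p⁻¹ + q⁻¹ = 1) : phi A q * phi B p ≤ (n : ℝ)⁻¹ * (A * B).trace := by
  have hq : q < 0 := inv_lt_zero.mp (by linarith [(one_lt_inv₀ hp0).mpr hp1])
  have : Nonempty (Fin n) := ⟨⟨0, hn⟩⟩
  obtain ⟨M, hM, htr⟩ := hA.1.exists_mem_doublyStochastic_trace_mul_eq hB.1
  have hμ : 0 ≤ hB.1.eigenvalues := hB.eigenvalues_nonneg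
  have hd := mulVec_nonneg_of_mem_doublyStochastic hM hμ
  by_cases hApd : A.PosDef
  · have hBd : phi B p ≤ powerMean (M *ᵥ hB.1.eigenvalues) p := by
      rw [phi_eq_powerMean hB.1 hp0.ne' (.inl hp0)]
      exact powerMean_le_powerMean_of_sum_rpow_le hμ hp0
        ((concaveOn_rpow hp0.le hp1.le).sum_le_sum_mulVec_of_mem_doublyStochastic hM hμ)
    have hHolder := powerMean_mul_powerMean_le_of_lt_one hd hApd.eigenvalues_pos hp0 hp1 hpq
    rw [Fintype.card_fin] at hHolder
    rw [phi_eq_powerMean hA.1 hq.ne (.inr hApd), mul_comm, htr]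
    calc phi B p * powerMean hA.1.eigenvalues q
        ≤ powerMean (M *ᵥ hB.1.eigenvalues) p * powerMean hA.1.eigenvalues q := by
          gcongr
          exact powerMean_nonneg (fun i => (hApd.eigenvalues_pos i).le) q
      _ ≤ _ := hHolder
      _ = _ := by simp_rw [mul_comm ((M *ᵥ _) _)]
  · rw [phi_of_neg_of_not_posDef hq hApd, zero_mul, htr]
    exact mul_nonneg (by positivity)
      (sum_nonneg fun i _ => mul_nonneg (hA.eigenvalues_nonneg i) (hd i))

end MatrixMean

/-- matrix Hölder inequality: for `A ≻ 0`, `B ⪰ 0` and conjugate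
exponents `p, q < 1` with `pq = p + q`, one has `φ_q(A) φ_p(B) ≤ (1/n) Trace(AB)`. -/
theorem stmt1 {n : ℕ} (hn : 0 < n)
    (A B : Matrix (Fin n) (Fin n) ℝ) (hA : A.PosDef) (hB : B.PosSemidef)
    (p q : ℝ) (hp : p < 1) (hq : q < 1) (hpq : p * q = p + q) :
    phi A q * phi B p ≤ (1 / (n : ℝ)) * (A * B).trace := by
  rw [one_div]
  rcases lt_trichotomy p 0 with hp0 | rfl | hp0
  · have hq0 : 0 < q := by nlinarith
    rw [mul_comm, trace_mul_comm]
    exact phi_mul_phi_le_trace_of_pos hn hB hA.posSemidef hq0 hq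
      (by rw [add_comm]; exact inv_add_inv_eq_one_of_mul_eq_add hp0.ne hq0.ne' hpq)
  · obtain rfl : q = 0 := by linarith
    have : Nonempty (Fin n) := ⟨⟨0, hn⟩⟩
    simpa [phi_zero] using det_rpow_mul_det_rpow_le_trace hA.posSemidef hB
  · have hq0 : q < 0 := by nlinarith
    exact phi_mul_phi_le_trace_of_pos hn hA.posSemidef hB hp0 hp
      (inv_add_inv_eq_one_of_mul_eq_add hp0.ne' hq0.ne hpq)
end

section
/- Let $M \succ 0$ and $x \in \mathbb{R}^n$, set $\hat{g} = -\operatorname{Trace}(M^{-1})$, $\omega = x^T M^{-1} x$, $\alpha = x^T M^{-2} x$, and for $\lambda > -1$ with $1+\lambda\omega>0$ define $F(\lambda) = (1+\lambda)\hat{g} + \frac{\lambda(1+\lambda)}{1+\lambda\omega}\alpha$. Then $F(\lambda) = -\operatorname{Trace}(M_+^{-1})$ where $M_+ = \frac{1}{1+\lambda}(M + \lambda xx^T)$, and $F'(\lambda) = \hat{g} + \frac{\lambda^2\omega + 2\lambda + 1}{(1+\lambda\omega)^2}\alpha$. -/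
/-!
By the Sherman–Morrison formula, `(M + λxxᵀ)⁻¹ = M⁻¹ - λ/(1 + λω) • M⁻¹xxᵀM⁻¹`, whose trace is
`Trace(M⁻¹) - λα/(1 + λω)`; since `M₊⁻¹ = (1 + λ)(M + λxxᵀ)⁻¹`, this gives `F(λ) = -Trace(M₊⁻¹)`.
-/

open Matrix

namespace Matrix

variable {m K : Type*} [Fintype m] [DecidableEq m] [Field K]

theorem inv_smul_eq_inv_smul_inv (k : K) (A : Matrix m m K) : (k • A)⁻¹ = k⁻¹ • A⁻¹ := by
  rcases eq_or_ne k 0 with rfl | hk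
  · simp
  by_cases hA : IsUnit A.det
  · exact inv_smul' A (Units.mk0 k hk) hA
  · have hkA : ¬IsUnit (k • A).det := by
      rwa [det_smul, IsUnit.mul_iff, not_and_or, or_iff_right (by simp [hk])]
    rw [nonsing_inv_apply_not_isUnit _ hA, nonsing_inv_apply_not_isUnit _ hkA, smul_zero]

/-- The Sherman–Morrison formula. -/
theorem inv_add_smul_vecMulVec {A : Matrix m m K} (hA : IsUnit A.det) (c : K) (u v : m → K)
    (h : 1 + c * (v ⬝ᵥ A⁻¹ *ᵥ u) ≠ 0) :
    (A + c • vecMulVec u v)⁻¹ =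
      A⁻¹ - (c / (1 + c * (v ⬝ᵥ A⁻¹ *ᵥ u))) • (A⁻¹ * vecMulVec u v * A⁻¹) := by
  apply inv_eq_right_inv
  have hA_mul : A * (A⁻¹ * vecMulVec u v * A⁻¹) = vecMulVec u v * A⁻¹ := by
    rw [Matrix.mul_assoc, mul_nonsing_inv_cancel_left _ _ hA]
  have hV_mul : vecMulVec u v * (A⁻¹ * vecMulVec u v * A⁻¹) =
      (v ⬝ᵥ A⁻¹ *ᵥ u) • (vecMulVec u v * A⁻¹) := by
    rw [← Matrix.mul_assoc, ← Matrix.mul_assoc, vecMulVec_mul, vecMulVec_mul_vecMulVec,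
      vecMulVec_smul, smul_mul, ← vecMulVec_mul, dotProduct_mulVec]
  simp only [add_mul, mul_sub, Matrix.mul_smul, Matrix.smul_mul, hA_mul, hV_mul,
    mul_nonsing_inv _ hA, smul_smul]
  match_scalars
  · ring
  · field_simp
    ring

omit [DecidableEq m] in
theorem trace_mul_vecMulVec_mul (A B : Matrix m m K) (u v : m → K) :
    (A * vecMulVec u v * B).trace = v ⬝ᵥ (B * A) *ᵥ u := by
  rw [trace_mul_cycle, mul_vecMulVec, trace_vecMulVec, dotProduct_comm]

end Matrix

theorem hasDerivAt_lineSearchObjective (g w a lam : ℝ) (h : 1 + lam * w ≠ 0) :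
    HasDerivAt (fun l => (1 + l) * g + l * (1 + l) / (1 + l * w) * a)
      (g + (lam ^ 2 * w + 2 * lam + 1) / (1 + lam * w) ^ 2 * a) lam := by
  have hl := hasDerivAt_id' lam
  refine (((hl.const_add 1).mul_const g).add
    (((hl.mul (hl.const_add 1)).div ((hl.mul_const w).const_add 1) h).mul_const a)).congr_deriv ?_
  simp only [Pi.mul_apply]
  field_simp
  ring

theorem stmt10_general {n : ℕ} (M : Matrix (Fin n) (Fin n) ℝ) (hM : M.PosDef)
    (x : Fin n → ℝ) (g w a : ℝ)
    (hg : g = -(M⁻¹).trace) (hw : w = x ⬝ᵥ M⁻¹ *ᵥ x)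
    (ha : a = x ⬝ᵥ (M⁻¹ * M⁻¹) *ᵥ x)
    (F : ℝ → ℝ) (hF : F = fun lam => (1 + lam) * g + lam * (1 + lam) / (1 + lam * w) * a)
    (lam : ℝ) (h2 : 0 < 1 + lam * w)
    (Mp : Matrix (Fin n) (Fin n) ℝ)
    (hMp : Mp = (1 + lam)⁻¹ • (M + lam • vecMulVec x x)) :
    F lam = -(Mp⁻¹).trace ∧
      HasDerivAt F (g + (lam ^ 2 * w + 2 * lam + 1) / (1 + lam * w) ^ 2 * a) lam := by
  subst hF hMp
  refine ⟨?_, hasDerivAt_lineSearchObjective g w a lam h2.ne'⟩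
  have hM_det : IsUnit M.det := (isUnit_iff_isUnit_det M).mp hM.isUnit
  rw [inv_smul_eq_inv_smul_inv, inv_inv, hw, inv_add_smul_vecMulVec hM_det lam x x (hw ▸ h2.ne'),
    trace_smul, trace_sub, trace_smul, trace_mul_vecMulVec_mul, ← ha, ← hw, hg]
  simp only [smul_eq_mul]
  ring

/-- along the line search, with `ĝ = -Trace(M⁻¹)`, `ω = xᵀM⁻¹x`,
`α = xᵀM⁻²x` and `F(λ) = (1+λ)ĝ + λ(1+λ)α/(1+λω)`, one has
`F(λ) = -Trace(M₊⁻¹)` where `M₊ = (M + λxxᵀ)/(1+λ)`, and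
`F'(λ) = ĝ + (λ²ω + 2λ + 1)α/(1+λω)²`. -/
theorem stmt10 {n : ℕ} (M : Matrix (Fin n) (Fin n) ℝ) (hM : M.PosDef)
    (x : Fin n → ℝ) (g w a : ℝ)
    (hg : g = -(M⁻¹).trace) (hw : w = x ⬝ᵥ M⁻¹ *ᵥ x)
    (ha : a = x ⬝ᵥ (M⁻¹ * M⁻¹) *ᵥ x)
    (F : ℝ → ℝ) (hF : F = fun lam => (1 + lam) * g + lam * (1 + lam) / (1 + lam * w) * a)
    (lam : ℝ) (h1 : -1 < lam) (h2 : 0 < 1 + lam * w)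
    (Mp : Matrix (Fin n) (Fin n) ℝ)
    (hMp : Mp = (1 + lam)⁻¹ • (M + lam • vecMulVec x x)) :
    F lam = -(Mp⁻¹).trace ∧
      HasDerivAt F (g + (lam ^ 2 * w + 2 * lam + 1) / (1 + lam * w) ^ 2 * a) lam :=
  stmt10_general M hM x g w a hg hw ha F hF lam h2 Mp hMp
end

section
/- Let $x_1,\dots,x_m$ span $\mathbb{R}^n$ and let $u \geq 0$ sum to 1 with $M(u) \succ 0$. Suppose $u$ is a $\delta$-primal feasible solution for the D-optimal design problem, i.e., $x_j^T M(u)^{-1} x_j \leq n(1+\delta)$ for all $j$. Then $u$ is an $(n + n\delta - 1)$-primal feasible solution for the A-optimal design problem, i.e., $x_j^T M(u)^{-2} x_j \leq (n + n\delta)\operatorname{Trace}(M(u)^{-1})$ for all $j$. -/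
/-!
For `A = M⁻¹ ⪰ 0` with symmetric square root `S`, we have
`xᵀ A² x = (Sx)ᵀ A (Sx) ≤ Trace(A) ‖Sx‖² = Trace(A) · xᵀ A x`,
the middle step being the bound `yᵀ A y ≤ Trace(A) ‖y‖²` (Cauchy–Schwarz on each rank-one
summand of `A = ∑ wᵢ wᵢᵀ`). The D-optimality bound on `xᵀ A x` then finishes.
-/

open Matrix

namespace Matrix

variable {ι : Type*} [Fintype ι]

lemma PosSemidef.dotProduct_mulVec_le_trace_mul {A : Matrix ι ι ℝ} (hA : A.PosSemidef)
    (v : ι → ℝ) : v ⬝ᵥ A *ᵥ v ≤ A.trace * (v ⬝ᵥ v) := by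
  obtain ⟨m, w, rfl⟩ := posSemidef_iff_eq_sum_vecMulVec.mp hA
  simp only [star_trivial, sum_mulVec, dotProduct_sum, trace_sum, Finset.sum_mul]
  gcongr with i
  rw [vecMulVec_mulVec, dotProduct_smul, trace_vecMulVec, op_smul_eq_mul, dotProduct_comm v]
  simpa only [dotProduct, sq, mul_comm] using
    Finset.sum_mul_sq_le_sq_mul_sq Finset.univ (w i) v

lemma PosSemidef.dotProduct_mul_self_mulVec_le_trace_mul {A : Matrix ι ι ℝ} (hA : A.PosSemidef)
    (v : ι → ℝ) : v ⬝ᵥ (A * A) *ᵥ v ≤ A.trace * (v ⬝ᵥ A *ᵥ v) := by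
  classical
  open scoped MatrixOrder in
  obtain ⟨S, hS, -, rfl⟩ :=
    CFC.exists_sqrt_of_isSelfAdjoint_of_quasispectrumRestricts hA.isHermitian
      (QuasispectrumRestricts.nnreal_of_nonneg hA.nonneg)
  have hSt : Sᵀ = S := by simpa [star_eq_conjTranspose] using hS.star_eq
  have hdot (u w : ι → ℝ) : u ⬝ᵥ S *ᵥ w = S *ᵥ u ⬝ᵥ w := by
    rw [dotProduct_mulVec, ← mulVec_transpose, hSt]
  calc v ⬝ᵥ (S * S * (S * S)) *ᵥ v = S *ᵥ v ⬝ᵥ (S * S) *ᵥ (S *ᵥ v) := by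
        simp only [← mulVec_mulVec, hdot]
    _ ≤ (S * S).trace * (S *ᵥ v ⬝ᵥ S *ᵥ v) := hA.dotProduct_mulVec_le_trace_mul _
    _ = (S * S).trace * (v ⬝ᵥ (S * S) *ᵥ v) := by rw [← mulVec_mulVec, hdot v]

end Matrix

theorem stmt14_general {n m : ℕ} (x : Fin m → Fin n → ℝ)
    (M : Matrix (Fin n) (Fin n) ℝ)
    (hMpd : M.PosDef) (δ : ℝ)
    (hD : ∀ j, x j ⬝ᵥ M⁻¹ *ᵥ x j ≤ (n : ℝ) * (1 + δ)) :
    ∀ j, x j ⬝ᵥ (M⁻¹ * M⁻¹) *ᵥ x j ≤ ((n : ℝ) + (n : ℝ) * δ) * (M⁻¹).trace := by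
  intro j
  have hinv : (M⁻¹).PosSemidef := hMpd.inv.posSemidef
  calc x j ⬝ᵥ (M⁻¹ * M⁻¹) *ᵥ x j ≤ (M⁻¹).trace * (x j ⬝ᵥ M⁻¹ *ᵥ x j) :=
        hinv.dotProduct_mul_self_mulVec_le_trace_mul _
    _ ≤ (M⁻¹).trace * (n * (1 + δ)) := mul_le_mul_of_nonneg_left (hD j) hinv.trace_nonneg
    _ = (n + n * δ) * (M⁻¹).trace := by ring

/-- a `δ`-primal feasible solution for the D-optimal design problem
(`xⱼᵀ M(u)⁻¹ xⱼ ≤ n(1+δ)` for all `j`) is an `(n + nδ - 1)`-primal feasible solution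
for the A-optimal design problem: `xⱼᵀ M(u)⁻² xⱼ ≤ (n + nδ) Trace(M(u)⁻¹)`. -/
theorem stmt14 {n m : ℕ} (x : Fin m → Fin n → ℝ)
    (hspan : Submodule.span ℝ (Set.range x) = ⊤)
    (u : Fin m → ℝ) (hu : ∀ i, 0 ≤ u i) (hsum : ∑ i, u i = 1)
    (M : Matrix (Fin n) (Fin n) ℝ) (hM : M = ∑ i, u i • vecMulVec (x i) (x i))
    (hMpd : M.PosDef) (δ : ℝ)
    (hD : ∀ j, x j ⬝ᵥ M⁻¹ *ᵥ x j ≤ (n : ℝ) * (1 + δ)) :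
    ∀ j, x j ⬝ᵥ (M⁻¹ * M⁻¹) *ᵥ x j ≤ ((n : ℝ) + (n : ℝ) * δ) * (M⁻¹).trace :=
  stmt14_general x M hMpd δ hD
end
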